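/- arXiv:2009.14680 — 9 statements merged into one kernel-verified Lean document; each statement's English description precedes it below -/
import Mathlib

section
/- Let Y be a first-countable topological space and G a topological group acting continuously on Y, and endow the orbit space Y/G with the quotient topology. If (x_n) is a sequence in Y such that the orbits [x_n] converge to [x] in Y/G for some x ∈ Y, then there exist a strictly increasing sequence of indices (n_k) and elements g_k ∈ G such that g_k • x_{n_k} converges to x in Y. -/
/-!
Fix a countable antitone neighbourhood basis `U k` of `x₀`. The quotient map `Y → Y/G` is open,
so the image of `U k` is a neighbourhood of `[x₀]`, hence eventually contains `[x n]`: some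
translate of `x n` lies in `U k`. A diagonal extraction picks one index for each `k`.
-/

open Filter Topology

theorem IsOpenMap.exists_strictMono_lift_tendsto {X Y : Type*} [TopologicalSpace X]
    [TopologicalSpace Y] [FirstCountableTopology Y] {π : Y → X} (hπ : IsOpenMap π)
    {x : ℕ → Y} {x₀ : Y} (h : Tendsto (π ∘ x) atTop (𝓝 (π x₀))) :
    ∃ n : ℕ → ℕ, StrictMono n ∧ ∃ y : ℕ → Y,
      (∀ k, π (y k) = π (x (n k))) ∧ Tendsto y atTop (𝓝 x₀) := by
  obtain ⟨U, hU⟩ := (𝓝 x₀).exists_antitone_basis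
  have eventually_mem_image : ∀ k, ∀ᶠ m in atTop, π (x m) ∈ π '' U k :=
    fun k => h (hπ.image_mem_nhds (hU.mem k))
  obtain ⟨n, hn, hmem⟩ := extraction_forall_of_eventually eventually_mem_image
  choose y hyU hy using hmem
  exact ⟨n, hn, y, hy, hU.tendsto hyU⟩

theorem orbit_quotient_convergence_lift_general
    {Y : Type*} [TopologicalSpace Y] [FirstCountableTopology Y]
    {G : Type*} [Group G] [TopologicalSpace G]
    [MulAction G Y] [ContinuousSMul G Y]
    (x : ℕ → Y) (x₀ : Y)
    (h : Filter.Tendsto (fun n => Quotient.mk (MulAction.orbitRel G Y) (x n))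
      Filter.atTop (nhds (Quotient.mk (MulAction.orbitRel G Y) x₀))) :
    ∃ n : ℕ → ℕ, StrictMono n ∧ ∃ g : ℕ → G,
      Filter.Tendsto (fun k => g k • x (n k)) Filter.atTop (nhds x₀) := by
  obtain ⟨n, hn, y, hy, hy_tendsto⟩ :=
    (isOpenMap_quotient_mk'_mul (Γ := G) (T := Y)).exists_strictMono_lift_tendsto h
  have in_orbit : ∀ k, ∃ g : G, g • x (n k) = y k :=
    fun k => MulAction.orbitRel_apply.1 (Quotient.exact (hy k))
  choose g hg using in_orbit
  exact ⟨n, hn, g, by simpa only [hg] using hy_tendsto⟩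

/-- Let `Y` be a first-countable topological space and `G` a topological
group acting continuously on `Y`, with the orbit space `Y/G` carrying the quotient topology.
If `(x n)` is a sequence in `Y` whose orbits converge to the orbit of `x₀` in `Y/G`, then
there are a strictly increasing sequence of indices `n` and group elements `g k` such that
`g k • x (n k)` converges to `x₀` in `Y`. -/
theorem orbit_quotient_convergence_lift
    {Y : Type*} [TopologicalSpace Y] [FirstCountableTopology Y]
    {G : Type*} [Group G] [TopologicalSpace G] [IsTopologicalGroup G]
    [MulAction G Y] [ContinuousSMul G Y]
    (x : ℕ → Y) (x₀ : Y)
    (h : Filter.Tendsto (fun n => Quotient.mk (MulAction.orbitRel G Y) (x n))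
      Filter.atTop (nhds (Quotient.mk (MulAction.orbitRel G Y) x₀))) :
    ∃ n : ℕ → ℕ, StrictMono n ∧ ∃ g : ℕ → G,
      Filter.Tendsto (fun k => g k • x (n k)) Filter.atTop (nhds x₀) :=
  orbit_quotient_convergence_lift_general x x₀ h
end

section
/- Let S = {x ∈ X : h(x) ≠ 0}, with the subspace topology. Then the restricted ℂ*-action on S is proper; that is, the map ℂ* × S → S × S sending (t, x) to (t • x, x) is a proper map. -/
/-!
If `t • x₂ = x₁` and `h x₂ j ≠ 0`, homogeneity gives `‖t‖ ^ d j = ‖h x₁ j‖ / ‖h x₂ j‖`, a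
quantity that stays bounded for `(x₁, x₂)` near a point of `S × S`; since `d j ≥ 1` this bounds
`‖t‖`, and applied to `t⁻¹ • x₁ = x₂` it bounds `‖t⁻¹‖`. So locally in `S × S` the elements
carrying the second point to the first lie in a compact subset of `ℂˣ`, and a continuous action
on a Hausdorff space with this property is proper.
-/

open Filter Topology

/-- The set `S = {x : X | h x ≠ 0}` of points where `h` does not vanish, viewed as a
`ℂˣ`-invariant subset of `X`; invariance follows from the homogeneity of `h`. -/
def nonvanishingSubMulAction {X : Type*} [MulAction ℂˣ X] {n : ℕ}
    (h : X → Fin n → ℂ) (d : Fin n → ℕ)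
    (hhom : ∀ (t : ℂˣ) (x : X) (j : Fin n), h (t • x) j = (t : ℂ) ^ d j * h x j) :
    SubMulAction ℂˣ X where
  carrier := {x : X | h x ≠ 0}
  smul_mem' := by
    intro t x hx h0
    apply hx
    funext j
    have hj := hhom t x j
    rw [h0] at hj
    simp only [Pi.zero_apply] at hj
    rcases mul_eq_zero.mp hj.symm with h1 | h2
    · exact absurd h1 (pow_ne_zero _ t.ne_zero)
    · exact h2

theorem properSMul_of_isCompact_transporter_nhds {G X : Type*} [Group G] [TopologicalSpace G]
    [TopologicalSpace X] [T2Space X] [MulAction G X] [ContinuousSMul G X]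
    (hK : ∀ x₁ x₂ : X, ∃ K : Set G, IsCompact K ∧
      ∀ᶠ y in 𝓝 (x₁, x₂), ∀ g : G, g • y.2 = y.1 → g ∈ K) :
    ProperSMul G X := by
  refine properSMul_iff_continuousSMul_ultrafilter_tendsto_t2.mpr
    ⟨inferInstance, fun 𝒰 x₁ x₂ h𝒰 => ?_⟩
  obtain ⟨K, hKc, hKnhds⟩ := hK x₁ x₂
  have hfst : ∀ᶠ p in (𝒰 : Filter (G × X)), p.1 ∈ K :=
    (h𝒰.eventually hKnhds).mono fun p hp => hp p.1 rfl
  obtain ⟨g, -, hg⟩ := hKc.ultrafilter_le_nhds (𝒰.map Prod.fst) (le_principal_iff.mpr hfst)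
  exact ⟨g, hg⟩

theorem Units.isCompact_setOf_val_mem_and_inv_mem {M : Type*} [Monoid M] [TopologicalSpace M]
    [T1Space M] [ContinuousMul M] {A B : Set M} (hA : IsCompact A) (hB : IsCompact B) :
    IsCompact {u : Mˣ | (u : M) ∈ A ∧ ((u⁻¹ : Mˣ) : M) ∈ B} :=
  Units.isClosedEmbedding_embedProduct.isCompact_preimage
    (hA.prod (MulOpposite.opHomeomorph.symm.isCompact_preimage.mpr hB))

theorem le_max_one_of_pow_le {R : Type*} [Semiring R] [LinearOrder R] [IsOrderedRing R]
    {x M : R} {d : ℕ} (hd : d ≠ 0) (hx : x ^ d ≤ M) : x ≤ max 1 M := by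
  rcases le_or_gt x 1 with hx1 | hx1
  · exact le_max_of_le_left hx1
  · exact le_max_of_le_right ((le_self_pow₀ hx1.le hd).trans hx)

theorem eventually_norm_le_of_smul_eq {𝕜 X : Type*} [NormedField 𝕜] [TopologicalSpace X]
    [MulAction 𝕜ˣ X] {f : X → 𝕜} {d : ℕ} (hf : Continuous f) (hd : d ≠ 0)
    (hhom : ∀ (t : 𝕜ˣ) (x : X), f (t • x) = (t : 𝕜) ^ d * f x) (y₁ : X) {y₂ : X}
    (hy₂ : f y₂ ≠ 0) :
    ∃ R : ℝ, ∀ᶠ x in 𝓝 (y₁, y₂), ∀ t : 𝕜ˣ, t • x.2 = x.1 → ‖(t : 𝕜)‖ ≤ R := by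
  set ratio : X × X → ℝ := fun x => ‖f x.1‖ / ‖f x.2‖
  have hratio : ContinuousAt ratio (y₁, y₂) :=
    ((continuous_norm.comp (hf.comp continuous_fst)).continuousAt.div
      (continuous_norm.comp (hf.comp continuous_snd)).continuousAt (norm_ne_zero_iff.mpr hy₂))
  refine ⟨max 1 (ratio (y₁, y₂) + 1), ?_⟩
  filter_upwards [hratio.eventually (eventually_lt_nhds (lt_add_one _)),
    (hf.comp continuous_snd).continuousAt.eventually_ne hy₂] with x hx hx₂ t ht
  have hpow : ‖(t : 𝕜)‖ ^ d = ratio x := by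
    change _ = ‖f x.1‖ / ‖f x.2‖
    rw [eq_div_iff (norm_ne_zero_iff.mpr (show f x.2 ≠ 0 from hx₂)), ← norm_pow, ← norm_mul,
      ← hhom, ht]
  exact le_max_one_of_pow_le hd (hpow.trans_lt hx).le

theorem cstar_action_proper_off_nilpotent_cone_general
    {X : Type*} [TopologicalSpace X] [TopologicalSpace.MetrizableSpace X]
    [MulAction ℂˣ X] [ContinuousSMul ℂˣ X]
    {n : ℕ} (h : X → Fin n → ℂ) (hcont : Continuous h)
    (d : Fin n → ℕ) (hd : ∀ j, 1 ≤ d j)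
    (hhom : ∀ (t : ℂˣ) (x : X) (j : Fin n), h (t • x) j = (t : ℂ) ^ d j * h x j) :
    IsProperMap (fun p : ℂˣ × (nonvanishingSubMulAction h d hhom) =>
      ((p.1 • p.2, p.2) :
        (nonvanishingSubMulAction h d hhom) × (nonvanishingSubMulAction h d hhom))) := by
  set S := nonvanishingSubMulAction h d hhom
  have hbound : ∀ (y₁ y₂ : S), ∃ R : ℝ,
      ∀ᶠ x in 𝓝 (y₁, y₂), ∀ t : ℂˣ, t • x.2 = x.1 → ‖(t : ℂ)‖ ≤ R := fun y₁ y₂ => by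
    obtain ⟨j, hj⟩ := Function.ne_iff.mp y₂.2
    exact eventually_norm_le_of_smul_eq (f := fun x : S => h x j)
      ((continuous_apply j).comp (hcont.comp continuous_subtype_val))
      (Nat.one_le_iff_ne_zero.mp (hd j)) (fun t x => hhom t x j) y₁ hj
  have : ProperSMul ℂˣ S := properSMul_of_isCompact_transporter_nhds fun y₁ y₂ => by
    obtain ⟨R, hR⟩ := hbound y₁ y₂
    obtain ⟨R', hR'⟩ := hbound y₂ y₁
    refine ⟨_, Units.isCompact_setOf_val_mem_and_inv_mem
      (isCompact_closedBall (0 : ℂ) R) (isCompact_closedBall (0 : ℂ) R'), ?_⟩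
    filter_upwards [hR, (continuous_swap.tendsto (y₁, y₂)).eventually hR'] with x hx hx' t ht
    exact ⟨mem_closedBall_zero_iff.mpr (hx t ht),
      mem_closedBall_zero_iff.mpr (hx' t⁻¹ (inv_smul_eq_iff.mpr ht.symm))⟩
  exact ProperSMul.isProperMap_smul_pair

/-- Let `X` be a metrizable space with a continuous `ℂˣ`-action, and
`h : X → ℂⁿ` a continuous proper map which is homogeneous of degrees `d j ≥ 1` for the
action. Then the `ℂˣ`-action on `S = {x | h x ≠ 0}` (with the subspace topology) is
proper: the map `ℂˣ × S → S × S`, `(t, x) ↦ (t • x, x)` is a proper map. -/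
theorem cstar_action_proper_off_nilpotent_cone
    {X : Type*} [TopologicalSpace X] [TopologicalSpace.MetrizableSpace X]
    [MulAction ℂˣ X] [ContinuousSMul ℂˣ X]
    {n : ℕ} (h : X → Fin n → ℂ) (hcont : Continuous h)
    (hproper : ∀ K : Set (Fin n → ℂ), IsCompact K → IsCompact (h ⁻¹' K))
    (d : Fin n → ℕ) (hd : ∀ j, 1 ≤ d j)
    (hhom : ∀ (t : ℂˣ) (x : X) (j : Fin n), h (t • x) j = (t : ℂ) ^ d j * h x j) :
    IsProperMap (fun p : ℂˣ × (nonvanishingSubMulAction h d hhom) =>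
      ((p.1 • p.2, p.2) :
        (nonvanishingSubMulAction h d hhom) × (nonvanishingSubMulAction h d hhom))) :=
  cstar_action_proper_off_nilpotent_cone_general h hcont d hd hhom
end

section
/- The diagonal ℂ*-action on W is proper; that is, the map ℂ* × W → W × W sending (t, p) to (t • p, p) is a proper map. -/
/-- The `ℂˣ`-invariant open set `W = (X × ℂ) \ (h⁻¹(0) × {0})`, for the diagonal action
`t • (x, z) = (t • x, t z)`; invariance follows from the homogeneity of `h`. -/
def symplecticCutSubMulAction {X : Type*} [MulAction ℂˣ X] {n : ℕ}
    (h : X → Fin n → ℂ) (d : Fin n → ℕ)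
    (hhom : ∀ (t : ℂˣ) (x : X) (j : Fin n), h (t • x) j = (t : ℂ) ^ d j * h x j) :
    SubMulAction ℂˣ (X × ℂ) where
  carrier := ((h ⁻¹' {0}) ×ˢ ({0} : Set ℂ))ᶜ
  smul_mem' := by
    intro t p hp hmem
    apply hp
    rw [Set.mem_prod] at hmem
    obtain ⟨h1, h2⟩ := hmem
    rw [Set.mem_prod]
    constructor
    · simp only [Set.mem_preimage, Set.mem_singleton_iff] at h1 ⊢
      funext j
      have hj := hhom t p.1 j
      have hfst : (t • p).1 = t • p.1 := rfl
      rw [hfst] at h1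
      rw [h1] at hj
      simp only [Pi.zero_apply] at hj
      rcases mul_eq_zero.mp hj.symm with h3 | h4
      · exact absurd h3 (pow_ne_zero _ t.ne_zero)
      · exact h4
    · simp only [Set.mem_singleton_iff] at h2 ⊢
      have hsnd : (t • p).2 = (t : ℂ) * p.2 := rfl
      rw [hsnd] at h2
      rcases mul_eq_zero.mp h2 with h3 | h4
      · exact absurd h3 t.ne_zero
      · exact h4

/-!
Measure the size of `p = (x, z)` by `N p = max ‖h x‖ ‖z‖`. It is continuous, positive exactly on
`W`, and since every `d j ≥ 1` it grows at least linearly along the action: `‖t‖ N p ≤ N (t • p)`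
for `‖t‖ ≥ 1`. Hence if `p` and `t • p` stay in a compact subset of `W`, on which `N` is bounded
above and away from `0`, both `‖t‖` and `‖t⁻¹‖` stay bounded, so `t` stays in a compact subset
of `ℂˣ`.
-/

open Filter

theorem le_max_one_div_of_mul_le {α : Type*} [Field α] [LinearOrder α] [IsStrictOrderedRing α]
    {a b c : α} (hb : 0 < b) (h : 1 ≤ a → a * b ≤ c) : a ≤ max 1 (c / b) := by
  rcases le_total a 1 with ha | ha
  · exact le_max_of_le_left ha
  · exact le_max_of_le_right ((le_div_iff₀ hb).2 (h ha))

theorem Units.isCompact_setOf_norm_le {𝕜 : Type*} [NormedField 𝕜] [ProperSpace 𝕜]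
    (C C' : ℝ) : IsCompact {t : 𝕜ˣ | ‖(t : 𝕜)‖ ≤ C ∧ ‖((t⁻¹ : 𝕜ˣ) : 𝕜)‖ ≤ C'} := by
  have hK : IsCompact (Metric.closedBall (0 : 𝕜) C ×ˢ
      (MulOpposite.op '' Metric.closedBall (0 : 𝕜) C')) :=
    (isCompact_closedBall _ _).prod ((isCompact_closedBall _ _).image MulOpposite.continuous_op)
  convert Units.isClosedEmbedding_embedProduct.isCompact_preimage hK using 1
  ext t
  simp only [Set.mem_ofPred_eq, Set.mem_preimage, Units.embedProduct_apply, Set.mem_prod,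
    MulOpposite.op_injective.mem_set_image, mem_closedBall_zero_iff]

theorem properSMul_of_norm_mul_le {𝕜 Y : Type*} [NormedField 𝕜] [ProperSpace 𝕜]
    [TopologicalSpace Y] [T2Space Y] [MulAction 𝕜ˣ Y] [ContinuousSMul 𝕜ˣ Y] {N : Y → ℝ}
    (hN : Continuous N) (hpos : ∀ y, 0 < N y)
    (hgrowth : ∀ (t : 𝕜ˣ) (y : Y), 1 ≤ ‖(t : 𝕜)‖ → ‖(t : 𝕜)‖ * N y ≤ N (t • y)) :
    ProperSMul 𝕜ˣ Y := by
  refine properSMul_iff_continuousSMul_ultrafilter_tendsto_t2.2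
    ⟨inferInstance, fun 𝒰 y₁ y₂ hy => ?_⟩
  have hratio : Continuous fun p : Y × Y => N p.1 / N p.2 :=
    (hN.comp continuous_fst).div (hN.comp continuous_snd) fun p => (hpos _).ne'
  obtain ⟨C, hC⟩ := ((hratio.tendsto _).comp hy).isBoundedUnder_le
  obtain ⟨C', hC'⟩ := (((hratio.comp continuous_swap).tendsto _).comp hy).isBoundedUnder_le
  have hbound : ∀ᶠ p in (𝒰 : Filter (𝕜ˣ × Y)), p.1 ∈
      {t : 𝕜ˣ | ‖(t : 𝕜)‖ ≤ max 1 C ∧ ‖((t⁻¹ : 𝕜ˣ) : 𝕜)‖ ≤ max 1 C'} := by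
    filter_upwards [eventually_map.1 hC, eventually_map.1 hC'] with ⟨t, y⟩ ht ht'
    have hinv := le_max_one_div_of_mul_le (hpos (t • y)) (hgrowth t⁻¹ (t • y))
    rw [inv_smul_smul] at hinv
    exact ⟨(le_max_one_div_of_mul_le (hpos y) (hgrowth t y)).trans (max_le_max_left 1 ht),
      hinv.trans (max_le_max_left 1 ht')⟩
  obtain ⟨t, -, ht⟩ := (Units.isCompact_setOf_norm_le _ _).ultrafilter_le_nhds
    (𝒰.map Prod.fst) (le_principal_iff.2 hbound)
  exact ⟨t, ht⟩

section CutNorm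

variable {𝕜 X ι : Type*} [NormedField 𝕜] [Fintype ι]

def cutNorm (h : X → ι → 𝕜) (p : X × 𝕜) : ℝ := max ‖h p.1‖ ‖p.2‖

theorem continuous_cutNorm [TopologicalSpace X] {h : X → ι → 𝕜} (hcont : Continuous h) :
    Continuous (cutNorm h) :=
  (hcont.comp continuous_fst).norm.max continuous_snd.norm

theorem cutNorm_pos {h : X → ι → 𝕜} {p : X × 𝕜} (hp : p ∉ (h ⁻¹' {0}) ×ˢ ({0} : Set 𝕜)) :
    0 < cutNorm h p := by
  contrapose! hp
  exact ⟨norm_le_zero_iff.1 ((le_max_left _ _).trans hp),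
    norm_le_zero_iff.1 ((le_max_right _ _).trans hp)⟩

variable [MulAction 𝕜ˣ X] {h : X → ι → 𝕜} {d : ι → ℕ}

theorem norm_mul_norm_le_norm_smul_of_homogeneous (hd : ∀ j, 1 ≤ d j)
    (hhom : ∀ (t : 𝕜ˣ) (x : X) (j : ι), h (t • x) j = (t : 𝕜) ^ d j * h x j)
    {t : 𝕜ˣ} (ht : 1 ≤ ‖(t : 𝕜)‖) (x : X) : ‖(t : 𝕜)‖ * ‖h x‖ ≤ ‖h (t • x)‖ := by
  rw [← norm_smul]
  refine (pi_norm_le_iff_of_nonneg (norm_nonneg _)).2 fun j => ?_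
  calc ‖((t : 𝕜) • h x) j‖
      = ‖(t : 𝕜)‖ * ‖h x j‖ := by rw [Pi.smul_apply, smul_eq_mul, norm_mul]
    _ ≤ ‖(t : 𝕜)‖ ^ d j * ‖h x j‖ := by
      gcongr
      exact le_self_pow₀ ht (Nat.one_le_iff_ne_zero.1 (hd j))
    _ = ‖h (t • x) j‖ := by rw [hhom, norm_mul, norm_pow]
    _ ≤ ‖h (t • x)‖ := norm_le_pi_norm _ j

theorem norm_mul_cutNorm_le_cutNorm_smul (hd : ∀ j, 1 ≤ d j)
    (hhom : ∀ (t : 𝕜ˣ) (x : X) (j : ι), h (t • x) j = (t : 𝕜) ^ d j * h x j)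
    {t : 𝕜ˣ} (ht : 1 ≤ ‖(t : 𝕜)‖) (p : X × 𝕜) :
    ‖(t : 𝕜)‖ * cutNorm h p ≤ cutNorm h (t • p) := by
  rw [cutNorm, cutNorm, mul_max_of_nonneg _ _ (norm_nonneg _)]
  exact max_le_max (norm_mul_norm_le_norm_smul_of_homogeneous hd hhom ht p.1)
    (norm_mul _ _).ge

end CutNorm

theorem cstar_action_on_cut_space_proper_general
    {X : Type*} [TopologicalSpace X] [TopologicalSpace.MetrizableSpace X]
    [MulAction ℂˣ X] [ContinuousSMul ℂˣ X]
    {n : ℕ} (h : X → Fin n → ℂ) (hcont : Continuous h)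
    (d : Fin n → ℕ) (hd : ∀ j, 1 ≤ d j)
    (hhom : ∀ (t : ℂˣ) (x : X) (j : Fin n), h (t • x) j = (t : ℂ) ^ d j * h x j) :
    IsProperMap (fun p : ℂˣ × (symplecticCutSubMulAction h d hhom) =>
      ((p.1 • p.2, p.2) :
        (symplecticCutSubMulAction h d hhom) × (symplecticCutSubMulAction h d hhom))) :=
  (properSMul_of_norm_mul_le (N := fun p : symplecticCutSubMulAction h d hhom => cutNorm h p)
    ((continuous_cutNorm hcont).comp continuous_subtype_val) (fun p => cutNorm_pos p.2)
    fun _ p ht => norm_mul_cutNorm_le_cutNorm_smul hd hhom ht p).isProperMap_smul_pair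

set_option synthInstance.maxHeartbeats 1000000 in
/-- With `X` metrizable carrying a continuous `ℂˣ`-action, `h : X → ℂⁿ`
continuous, proper and homogeneous of degrees `d j ≥ 1`, the diagonal `ℂˣ`-action on
`W = (X × ℂ) \ (h⁻¹(0) × {0})` is proper: `(t, p) ↦ (t • p, p)` is a proper map
`ℂˣ × W → W × W`. -/
theorem cstar_action_on_cut_space_proper
    {X : Type*} [TopologicalSpace X] [TopologicalSpace.MetrizableSpace X]
    [MulAction ℂˣ X] [ContinuousSMul ℂˣ X]
    {n : ℕ} (h : X → Fin n → ℂ) (hcont : Continuous h)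
    (hproper : ∀ K : Set (Fin n → ℂ), IsCompact K → IsCompact (h ⁻¹' K))
    (d : Fin n → ℕ) (hd : ∀ j, 1 ≤ d j)
    (hhom : ∀ (t : ℂˣ) (x : X) (j : Fin n), h (t • x) j = (t : ℂ) ^ d j * h x j) :
    IsProperMap (fun p : ℂˣ × (symplecticCutSubMulAction h d hhom) =>
      ((p.1 • p.2, p.2) :
        (symplecticCutSubMulAction h d hhom) × (symplecticCutSubMulAction h d hhom))) :=
  cstar_action_on_cut_space_proper_general h hcont d hd hhom
end

section
/- W = ℂ* • f̃^{-1}(c), i.e. every point of W is of the form t • p with t ∈ ℂ* and f̃(p) = c, and every such point lies in W. Moreover, W coincides with the set of semistable points of X × ℂ, namely W = {p ∈ X × ℂ : the closure of the orbit ℂ* • p meets f̃^{-1}(c)}. -/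
/-!
Write `Z = h⁻¹(0) × {0}`, a closed `ℂˣ`-invariant set on which `f̃ > c`; hence no orbit closure
through `Z` meets `f̃⁻¹(c)`. For `p ∉ Z` follow the real ray `t ↦ eᵗ • p`. As `t → -∞` its image
under the proper map `(x, z) ↦ (h x, z)` tends to `0`, so the ray clusters at a point of `Z`, where
`f̃ > c`. As `t → +∞` either `|h|` blows up, which forces `f < c` because `f ≤ 0` is proper, or
`|eᵗ z|` blows up; either way `f̃ < c`. The intermediate value theorem puts a point of the ray on
`f̃⁻¹(c)`.
-/

open Filter Topology

noncomputable def expUnit (t : ℝ) : ℂˣ := Units.mk0 (Complex.exp t) (Complex.exp_ne_zero t)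

@[simp]
lemma coe_expUnit (t : ℝ) : (expUnit t : ℂ) = Complex.exp t := rfl

lemma norm_coe_expUnit (t : ℝ) : ‖(expUnit t : ℂ)‖ = Real.exp t := by
  simp [Complex.norm_exp]

@[fun_prop]
lemma continuous_expUnit : Continuous expUnit :=
  Units.isEmbedding_val₀.continuous_iff.2 (by fun_prop)

section Homogeneous

variable {X : Type*} [MulAction ℂˣ X] {n : ℕ} {h : X → Fin n → ℂ} {d : Fin n → ℕ}

lemma apply_smul_eq_zero_iff
    (hhom : ∀ (t : ℂˣ) (x : X) (j : Fin n), h (t • x) j = t ^ d j * h x j)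
    (t : ℂˣ) (x : X) : h (t • x) = 0 ↔ h x = 0 := by
  simp only [funext_iff, Pi.zero_apply, hhom, mul_eq_zero, pow_eq_zero_iff', t.ne_zero,
    false_and, false_or]

lemma smul_mem_nullcone_iff
    (hhom : ∀ (t : ℂˣ) (x : X) (j : Fin n), h (t • x) j = t ^ d j * h x j)
    (t : ℂˣ) (p : X × ℂ) :
    t • p ∈ (h ⁻¹' {0}) ×ˢ ({0} : Set ℂ) ↔ p ∈ (h ⁻¹' {0}) ×ˢ ({0} : Set ℂ) := by
  simp [apply_smul_eq_zero_iff hhom, Units.smul_def]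

lemma norm_apply_smul_expUnit
    (hhom : ∀ (t : ℂˣ) (x : X) (j : Fin n), h (t • x) j = t ^ d j * h x j)
    (t : ℝ) (x : X) (j : Fin n) : ‖h (expUnit t • x) j‖ = Real.exp t ^ d j * ‖h x j‖ := by
  rw [hhom, norm_mul, norm_pow, norm_coe_expUnit]

lemma tendsto_apply_smul_expUnit_atBot
    (hhom : ∀ (t : ℂˣ) (x : X) (j : Fin n), h (t • x) j = t ^ d j * h x j)
    (hd : ∀ j, 1 ≤ d j) (x : X) : Tendsto (fun t => h (expUnit t • x)) atBot (𝓝 0) := by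
  refine tendsto_pi_nhds.2 fun j => tendsto_zero_iff_norm_tendsto_zero.2 ?_
  simp only [norm_apply_smul_expUnit hhom]
  have hpow : Tendsto (fun t => Real.exp t ^ d j) atBot (𝓝 0) := by
    simpa [zero_pow (by grind : d j ≠ 0)] using Real.tendsto_exp_atBot.pow (d j)
  simpa using hpow.mul_const ‖h x j‖

lemma tendsto_norm_apply_smul_expUnit_atTop
    (hhom : ∀ (t : ℂˣ) (x : X) (j : Fin n), h (t • x) j = t ^ d j * h x j)
    (hd : ∀ j, 1 ≤ d j) {x : X} (hx : h x ≠ 0) :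
    Tendsto (fun t => ‖h (expUnit t • x)‖) atTop atTop := by
  obtain ⟨j, hj⟩ := Function.ne_iff.mp hx
  have hcoord : Tendsto (fun t => ‖h (expUnit t • x) j‖) atTop atTop := by
    simp only [norm_apply_smul_expUnit hhom]
    exact ((tendsto_pow_atTop (by grind)).comp Real.tendsto_exp_atTop).atTop_mul_const
      (norm_pos_iff.2 hj)
  exact tendsto_atTop_mono (fun t => norm_le_pi_norm _ j) hcoord

end Homogeneous

lemma lt_of_mem_nullcone {X : Type*} {f : X → ℝ} {c : ℝ} {n : ℕ} {h : X → Fin n → ℂ}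
    (hcf : ∀ x, h x = 0 → c < f x) {p : X × ℂ} (hp : p ∈ (h ⁻¹' {0}) ×ˢ ({0} : Set ℂ)) :
    c < f p.1 - ‖p.2‖ ^ 2 / 2 := by
  obtain ⟨hp₁, hp₂ : p.2 = 0⟩ := hp
  simpa [hp₂] using hcf p.1 hp₁

section Cut

variable {X : Type*} [TopologicalSpace X] {f : X → ℝ} {c : ℝ}

lemma eventually_lt_of_tendsto_norm_atTop {E ι : Type*} [SeminormedAddCommGroup E] {g : X → E}
    (hg : Continuous g) (hfproper : ∀ K : Set ℝ, IsCompact K → IsCompact (f ⁻¹' K))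
    (hfle : ∀ x, f x ≤ 0) {l : Filter ι} {u : ι → X} (hu : Tendsto (fun i => ‖g (u i)‖) l atTop) :
    ∀ᶠ i in l, f (u i) < c := by
  obtain ⟨M, hM⟩ :=
    (hfproper _ (isCompact_Icc (a := c) (b := 0))).exists_bound_of_continuousOn hg.continuousOn
  filter_upwards [hu.eventually_gt_atTop M] with i hi
  by_contra! hci
  exact hi.not_ge (hM _ ⟨hci, hfle _⟩)

variable [MulAction ℂˣ X] {n : ℕ} {h : X → Fin n → ℂ} {d : Fin n → ℕ}

lemma frequently_lt_smul_expUnit_atBot (hcont : Continuous h)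
    (hproper : ∀ K : Set (Fin n → ℂ), IsCompact K → IsCompact (h ⁻¹' K))
    (hd : ∀ j, 1 ≤ d j)
    (hhom : ∀ (t : ℂˣ) (x : X) (j : Fin n), h (t • x) j = t ^ d j * h x j)
    (hf : Continuous f) (hcf : ∀ x, h x = 0 → c < f x) (p : X × ℂ) :
    ∃ᶠ t in atBot, c < f (expUnit t • p).1 - ‖(expUnit t • p).2‖ ^ 2 / 2 := by
  have hproperProd : IsProperMap (Prod.map h id : X × ℂ → (Fin n → ℂ) × ℂ) :=
    (isProperMap_iff_isCompact_preimage.2 ⟨hcont, fun K hK => hproper K hK⟩).prodMap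
      isProperMap_id
  have hray : Tendsto (fun t => Prod.map h id (expUnit t • p)) atBot (𝓝 (0, 0)) := by
    refine (tendsto_apply_smul_expUnit_atBot hhom hd p.1).prodMk_nhds ?_
    simpa [Units.smul_def] using
      ((Complex.continuous_ofReal.tendsto 0).comp Real.tendsto_exp_atBot).mul_const p.2
  obtain ⟨y, hy, hcluster⟩ :=
    hproperProd.clusterPt_of_mapClusterPt (tendsto_map'_iff.2 hray).mapClusterPt
  have hyZ : y ∈ (h ⁻¹' {0}) ×ˢ ({0} : Set ℂ) := by
    simpa [Prod.ext_iff] using hy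
  have hcut : Continuous fun q : X × ℂ => f q.1 - ‖q.2‖ ^ 2 / 2 := by fun_prop
  exact mapClusterPt_iff_frequently.1
    (MapClusterPt.continuousAt_comp hcut.continuousAt hcluster) _
    (Ioi_mem_nhds (lt_of_mem_nullcone hcf hyZ))

lemma eventually_smul_expUnit_lt_atTop (hcont : Continuous h)
    (hd : ∀ j, 1 ≤ d j)
    (hhom : ∀ (t : ℂˣ) (x : X) (j : Fin n), h (t • x) j = t ^ d j * h x j)
    (hfproper : ∀ K : Set ℝ, IsCompact K → IsCompact (f ⁻¹' K)) (hfle : ∀ x, f x ≤ 0)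
    {p : X × ℂ} (hp : p ∉ (h ⁻¹' {0}) ×ˢ ({0} : Set ℂ)) :
    ∀ᶠ t in atTop, f (expUnit t • p).1 - ‖(expUnit t • p).2‖ ^ 2 / 2 < c := by
  rcases not_and_or.1 hp with hx | hz
  · filter_upwards [eventually_lt_of_tendsto_norm_atTop (c := c) hcont hfproper hfle
      (tendsto_norm_apply_smul_expUnit_atTop hhom hd hx)] with t ht
    have := sq_nonneg ‖(expUnit t • p).2‖
    rw [Prod.smul_fst]
    linarith
  · have hnorm : Tendsto (fun t : ℝ => ‖(expUnit t • p).2‖) atTop atTop := by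
      simpa [Units.smul_def, norm_coe_expUnit] using
        Real.tendsto_exp_atTop.atTop_mul_const (norm_pos_iff.2 hz)
    filter_upwards [(((tendsto_pow_atTop two_ne_zero).comp hnorm).atTop_div_const
      two_pos).eventually_gt_atTop (-c)] with t ht
    have := hfle (expUnit t • p).1
    simp only [Function.comp_apply] at ht
    linarith

lemma exists_smul_expUnit_eq [ContinuousSMul ℂˣ X] (hcont : Continuous h)
    (hproper : ∀ K : Set (Fin n → ℂ), IsCompact K → IsCompact (h ⁻¹' K))
    (hd : ∀ j, 1 ≤ d j)
    (hhom : ∀ (t : ℂˣ) (x : X) (j : Fin n), h (t • x) j = t ^ d j * h x j)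
    (hf : Continuous f) (hfproper : ∀ K : Set ℝ, IsCompact K → IsCompact (f ⁻¹' K))
    (hfle : ∀ x, f x ≤ 0) (hcf : ∀ x, h x = 0 → c < f x)
    {p : X × ℂ} (hp : p ∉ (h ⁻¹' {0}) ×ˢ ({0} : Set ℂ)) :
    ∃ t : ℝ, f (expUnit t • p).1 - ‖(expUnit t • p).2‖ ^ 2 / 2 = c := by
  obtain ⟨t₀, ht₀⟩ :=
    (frequently_lt_smul_expUnit_atBot hcont hproper hd hhom hf hcf p).exists
  obtain ⟨t₁, ht₁⟩ := (eventually_smul_expUnit_lt_atTop hcont hd hhom hfproper hfle hp).exists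
  have hray : Continuous fun t : ℝ => f (expUnit t • p).1 - ‖(expUnit t • p).2‖ ^ 2 / 2 := by
    fun_prop
  exact intermediate_value_univ t₁ t₀ hray ⟨ht₁.le, ht₀.le⟩

end Cut

theorem cut_space_eq_saturation_eq_semistable_general
    {X : Type*} [TopologicalSpace X]
    [MulAction ℂˣ X] [ContinuousSMul ℂˣ X]
    {n : ℕ} (h : X → Fin n → ℂ) (hcont : Continuous h)
    (hproper : ∀ K : Set (Fin n → ℂ), IsCompact K → IsCompact (h ⁻¹' K))
    (d : Fin n → ℕ) (hd : ∀ j, 1 ≤ d j)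
    (hhom : ∀ (t : ℂˣ) (x : X) (j : Fin n), h (t • x) j = (t : ℂ) ^ d j * h x j)
    (f : X → ℝ) (hf : Continuous f)
    (hfproper : ∀ K : Set ℝ, IsCompact K → IsCompact (f ⁻¹' K))
    (hfle : ∀ x, f x ≤ 0) (c : ℝ)
    (hcf : ∀ x, h x = 0 → c < f x) :
    (((h ⁻¹' {0}) ×ˢ ({0} : Set ℂ))ᶜ =
        {p : X × ℂ | ∃ (t : ℂˣ) (q : X × ℂ),
          f q.1 - ‖q.2‖ ^ 2 / 2 = c ∧ p = t • q}) ∧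
    (((h ⁻¹' {0}) ×ˢ ({0} : Set ℂ))ᶜ =
        {p : X × ℂ | (closure (MulAction.orbit ℂˣ p) ∩
          {q : X × ℂ | f q.1 - ‖q.2‖ ^ 2 / 2 = c}).Nonempty}) := by
  have hsaturation : ((h ⁻¹' {0}) ×ˢ ({0} : Set ℂ))ᶜ =
      {p : X × ℂ | ∃ (t : ℂˣ) (q : X × ℂ), f q.1 - ‖q.2‖ ^ 2 / 2 = c ∧ p = t • q} := by
    ext p
    refine ⟨fun hp => ?_, ?_⟩
    · obtain ⟨t, ht⟩ := exists_smul_expUnit_eq hcont hproper hd hhom hf hfproper hfle hcf hp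
      exact ⟨(expUnit t)⁻¹, expUnit t • p, ht, (inv_smul_smul _ _).symm⟩
    · rintro ⟨t, q, hq, rfl⟩ htq
      exact (lt_of_mem_nullcone hcf ((smul_mem_nullcone_iff hhom t q).1 htq)).ne' hq
  refine ⟨hsaturation, subset_antisymm ?_ ?_⟩
  · intro p hp
    obtain ⟨t, q, hq, rfl⟩ := hsaturation ▸ hp
    exact ⟨q, subset_closure ⟨t⁻¹, inv_smul_smul t q⟩, hq⟩
  · rintro p ⟨q, hq, hqc⟩ hp
    have hclosed : IsClosed ((h ⁻¹' {0}) ×ˢ ({0} : Set ℂ)) :=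
      (isClosed_singleton.preimage hcont).prod isClosed_singleton
    have horbit : MulAction.orbit ℂˣ p ⊆ (h ⁻¹' {0}) ×ˢ ({0} : Set ℂ) := by
      rintro _ ⟨t, rfl⟩
      exact (smul_mem_nullcone_iff hhom t p).2 hp
    exact (lt_of_mem_nullcone hcf (hclosed.closure_subset_iff.2 horbit hq)).ne' hqc

set_option synthInstance.maxHeartbeats 1000000 in
/-- With `X` metrizable carrying a continuous `ℂˣ`-action, `h : X → ℂⁿ`
continuous, proper, homogeneous of degrees `d j ≥ 1`, `f : X → ℝ` continuous, proper,
nonpositive, `c < 0` with `f x > c` whenever `h x = 0`, and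
`f̃ (x, z) = f x - |z|²/2` on `X × ℂ` (with the diagonal `ℂˣ`-action
`t • (x, z) = (t • x, t z)`), the set `W = (X × ℂ) \ (h⁻¹(0) × {0})` satisfies
`W = ℂˣ • f̃⁻¹(c)` and `W` equals the set of semistable points, i.e. the points whose
`ℂˣ`-orbit closure meets `f̃⁻¹(c)`. -/
theorem cut_space_eq_saturation_eq_semistable
    {X : Type*} [TopologicalSpace X] [TopologicalSpace.MetrizableSpace X]
    [MulAction ℂˣ X] [ContinuousSMul ℂˣ X]
    {n : ℕ} (h : X → Fin n → ℂ) (hcont : Continuous h)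
    (hproper : ∀ K : Set (Fin n → ℂ), IsCompact K → IsCompact (h ⁻¹' K))
    (d : Fin n → ℕ) (hd : ∀ j, 1 ≤ d j)
    (hhom : ∀ (t : ℂˣ) (x : X) (j : Fin n), h (t • x) j = (t : ℂ) ^ d j * h x j)
    (f : X → ℝ) (hf : Continuous f)
    (hfproper : ∀ K : Set ℝ, IsCompact K → IsCompact (f ⁻¹' K))
    (hfle : ∀ x, f x ≤ 0) (c : ℝ) (hc : c < 0)
    (hcf : ∀ x, h x = 0 → c < f x) :
    (((h ⁻¹' {0}) ×ˢ ({0} : Set ℂ))ᶜ =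
        {p : X × ℂ | ∃ (t : ℂˣ) (q : X × ℂ),
          f q.1 - ‖q.2‖ ^ 2 / 2 = c ∧ p = t • q}) ∧
    (((h ⁻¹' {0}) ×ˢ ({0} : Set ℂ))ᶜ =
        {p : X × ℂ | (closure (MulAction.orbit ℂˣ p) ∩
          {q : X × ℂ | f q.1 - ‖q.2‖ ^ 2 / 2 = c}).Nonempty}) :=
  cut_space_eq_saturation_eq_semistable_general h hcont hproper d hd hhom f hf hfproper hfle c hcf
end

section
/- For all x, y ∈ Y, the closures of the orbits G • x and G • y intersect if and only if r(x) and r(y) lie in the same G-orbit. -/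
/-!
A point `z` of the orbit closure of `x` has its own orbit closure inside that of `x`, so `r z`
is a point of `P` in the closure of `G • x` and hence, by (c), lies in the orbit of `r x`. A
common point `z` of the two orbit closures therefore links `r x` and `r y` through `r z`.
Conversely, the closure of `G • x` is `G`-invariant, so it contains the whole orbit of `r x`.
-/

open MulAction

theorem closure_orbit_subset_of_mem_closure_orbit {M α : Type*} [Monoid M] [TopologicalSpace α]
    [MulAction M α] [ContinuousConstSMul M α] {x y : α} (h : y ∈ closure (orbit M x)) :
    closure (orbit M y) ⊆ closure (orbit M x) :=
  closure_minimal
    (by rintro _ ⟨c, rfl⟩; exact smul_closure_orbit_subset c x (Set.smul_mem_smul_set h))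
    isClosed_closure

section Retraction

variable {Y G : Type*} [TopologicalSpace Y] [Group G] [MulAction G Y] [ContinuousConstSMul G Y]
  {P : Set Y} {r : Y → Y}

theorem retract_mem_orbit_of_mem_closure_orbit
    (ha : ∀ y : Y, r y ∈ closure (orbit G y)) (hb : ∀ y : Y, r y ∈ P)
    (hc : ∀ y : Y, ∀ p ∈ P, ∀ q ∈ P, p ∈ closure (orbit G y) →
      q ∈ closure (orbit G y) → ∃ g : G, g • p = q)
    {x z : Y} (hz : z ∈ closure (orbit G x)) : r z ∈ orbit G (r x) :=
  hc x (r x) (hb x) (r z) (hb z) (ha x) (closure_orbit_subset_of_mem_closure_orbit hz (ha z))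

theorem mem_closure_orbit_of_mem_orbit_retract (ha : ∀ y : Y, r y ∈ closure (orbit G y))
    {x y : Y} (h : y ∈ orbit G (r x)) : y ∈ closure (orbit G x) :=
  closure_orbit_subset_of_mem_closure_orbit (ha x) (subset_closure h)

end Retraction

/-- Let `G` act on a topological space `Y` by homeomorphisms, let
`P ⊆ Y` and let `r : Y → Y` satisfy: (a) `r y` lies in the closure of the orbit `G • y`;
(b) `r y ∈ P`; (c) any two points of `P` in the closure of a single orbit `G • y` lie
in the same `G`-orbit. Then for all `x, y ∈ Y`, the closures of `G • x` and `G • y`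
intersect if and only if `r x` and `r y` lie in the same `G`-orbit. -/
theorem orbitClosures_intersect_iff_retract_in_same_orbit
    {Y : Type*} [TopologicalSpace Y] {G : Type*} [Group G] [MulAction G Y]
    (hg : ∀ g : G, Continuous fun y : Y => g • y)
    (P : Set Y) (r : Y → Y)
    (ha : ∀ y : Y, r y ∈ closure (MulAction.orbit G y))
    (hb : ∀ y : Y, r y ∈ P)
    (hc : ∀ y : Y, ∀ p ∈ P, ∀ q ∈ P, p ∈ closure (MulAction.orbit G y) →
      q ∈ closure (MulAction.orbit G y) → ∃ g : G, g • p = q)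
    (x y : Y) :
    (closure (MulAction.orbit G x) ∩ closure (MulAction.orbit G y)).Nonempty ↔
      r y ∈ MulAction.orbit G (r x) := by
  have : ContinuousConstSMul G Y := ⟨hg⟩
  constructor
  · rintro ⟨z, hzx, hzy⟩
    have hx := retract_mem_orbit_of_mem_closure_orbit ha hb hc hzx
    have hy := retract_mem_orbit_of_mem_closure_orbit ha hb hc hzy
    rw [← orbit_eq_iff] at hx hy
    rw [← orbit_eq_iff, ← hx, hy]
  · intro h
    exact ⟨r y, mem_closure_orbit_of_mem_orbit_retract ha h, ha y⟩
end

section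
/- The relation x ~ y defined by 'the closures of G • x and G • y intersect' is an equivalence relation on Y, and the inclusion P ↪ Y induces a homeomorphism from the orbit space P/G onto the quotient space Y/~ (both with the quotient topology), whose inverse is the map induced by r. -/
/-- The relation on `Y`: the closures of the `G`-orbits of the two points intersect
(abstracting S-equivalence of semistable Higgs bundles). -/
def orbitClosureRel (G : Type*) [Group G] (Y : Type*) [TopologicalSpace Y]
    [MulAction G Y] (x y : Y) : Prop :=
  (closure (MulAction.orbit G x) ∩ closure (MulAction.orbit G y)).Nonempty

/-!
Orbit closures are `G`-invariant, so `z ∈ closure (G • x)` gives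
`closure (G • z) ⊆ closure (G • x)`. Hence `r x` and `r z` are two points of `P` in
`closure (G • x)`, and lie in one orbit. It follows that `x ~ y` iff `r x` and `r y` lie in one
orbit, so `~` is the pullback of the orbit relation along `r`, hence an equivalence. The inclusion
`P ↪ Y` and `r` then induce mutually inverse continuous maps between the two quotients.
-/

open MulAction

def Homeomorph.quotientOfInverseUpToRel {X Z : Type*} [TopologicalSpace X] [TopologicalSpace Z]
    {s : Setoid X} {t : Setoid Z} (f : X → Z) (g : Z → X) (hf : Continuous f)
    (hg : Continuous g) (hf_rel : ∀ a b, s a b → t (f a) (f b))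
    (hg_rel : ∀ a b, t a b → s (g a) (g b)) (hgf : ∀ x, s (g (f x)) x)
    (hfg : ∀ z, t (f (g z)) z) : Quotient s ≃ₜ Quotient t where
  toFun := Quotient.map f hf_rel
  invFun := Quotient.map g hg_rel
  left_inv := Quotient.ind fun x => Quotient.sound (hgf x)
  right_inv := Quotient.ind fun z => Quotient.sound (hfg z)
  continuous_toFun := (continuous_quotient_mk'.comp hf).quotient_lift _
  continuous_invFun := (continuous_quotient_mk'.comp hg).quotient_lift _

section OrbitClosure

variable {G Y : Type*} [Group G] [TopologicalSpace Y] [MulAction G Y]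

theorem closure_orbit_subset_of_mem_closure_orbit_s9 [ContinuousConstSMul G Y] {x z : Y}
    (hz : z ∈ closure (orbit G x)) : closure (orbit G z) ⊆ closure (orbit G x) :=
  closure_minimal
    (by rintro _ ⟨g, rfl⟩; exact smul_closure_orbit_subset g x (Set.smul_mem_smul_set hz))
    isClosed_closure

theorem orbitClosureRel_of_orbitRel {x y : Y} (h : orbitRel G Y x y) : orbitClosureRel G Y x y :=
  ⟨x, subset_closure (mem_orbit_self x), subset_closure (orbitRel_apply.1 h)⟩

variable [ContinuousConstSMul G Y] {P : Set Y} {r : Y → Y}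
  (ha : ∀ y : Y, r y ∈ closure (orbit G y)) (hb : ∀ y : Y, r y ∈ P)
  (hc : ∀ y : Y, ∀ p ∈ P, ∀ q ∈ P, p ∈ closure (orbit G y) →
      q ∈ closure (orbit G y) → ∃ g : G, g • p = q)
include ha hb hc

theorem orbitRel_of_mem_closure_orbit {x z : Y} (hz : z ∈ closure (orbit G x)) :
    orbitRel G Y (r z) (r x) :=
  hc x (r x) (hb x) (r z) (hb z) (ha x) (closure_orbit_subset_of_mem_closure_orbit_s9 hz (ha z))

theorem orbitClosureRel_iff_orbitRel {x y : Y} :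
    orbitClosureRel G Y x y ↔ orbitRel G Y (r x) (r y) := by
  constructor
  · rintro ⟨z, hzx, hzy⟩
    exact (orbitRel G Y).iseqv.trans
      ((orbitRel G Y).iseqv.symm (orbitRel_of_mem_closure_orbit ha hb hc hzx))
      (orbitRel_of_mem_closure_orbit ha hb hc hzy)
  · rintro ⟨g, hg⟩
    refine ⟨r x, ha x, ?_⟩
    rw [← hg]
    exact smul_closure_orbit_subset g y (Set.smul_mem_smul_set (ha y))

theorem equivalence_orbitClosureRel : Equivalence (orbitClosureRel G Y) := by
  have h : orbitClosureRel G Y = Setoid.comap r (orbitRel G Y) :=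
    funext₂ fun _ _ => propext (orbitClosureRel_iff_orbitRel ha hb hc)
  exact h ▸ (Setoid.comap r (orbitRel G Y)).iseqv

end OrbitClosure

theorem moduli_homeomorph_sEquivalence_quotient_general
    {Y : Type*} [TopologicalSpace Y] {G : Type*} [Group G] [MulAction G Y]
    (hg : ∀ g : G, Continuous fun y : Y => g • y)
    (P : Set Y) (r : Y → Y)
    (ha : ∀ y : Y, r y ∈ closure (MulAction.orbit G y))
    (hb : ∀ y : Y, r y ∈ P)
    (hc : ∀ y : Y, ∀ p ∈ P, ∀ q ∈ P, p ∈ closure (MulAction.orbit G y) →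
      q ∈ closure (MulAction.orbit G y) → ∃ g : G, g • p = q)
    (hr : Continuous r)
    (hrP : ∀ p ∈ P, r p ∈ MulAction.orbit G p) :
    ∃ hequiv : Equivalence (orbitClosureRel G Y),
      ∃ e : Quotient (Setoid.comap (Subtype.val : P → Y) (MulAction.orbitRel G Y)) ≃ₜ
            Quotient (Setoid.mk (orbitClosureRel G Y) hequiv),
        (∀ p : P,
          e (Quotient.mk (Setoid.comap (Subtype.val : P → Y) (MulAction.orbitRel G Y)) p)
            = Quotient.mk (Setoid.mk (orbitClosureRel G Y) hequiv) (p : Y)) ∧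
        (∀ y : Y,
          e.symm (Quotient.mk (Setoid.mk (orbitClosureRel G Y) hequiv) y)
            = Quotient.mk (Setoid.comap (Subtype.val : P → Y) (MulAction.orbitRel G Y))
                (⟨r y, hb y⟩ : P)) := by
  have : ContinuousConstSMul G Y := ⟨hg⟩
  exact ⟨equivalence_orbitClosureRel ha hb hc,
    Homeomorph.quotientOfInverseUpToRel Subtype.val (fun y => ⟨r y, hb y⟩)
      continuous_subtype_val (hr.subtype_mk hb) (fun _ _ => orbitClosureRel_of_orbitRel)
      (fun _ _ => (orbitClosureRel_iff_orbitRel ha hb hc).1) (fun p => hrP p p.2)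
      (fun y => ⟨r y, subset_closure (mem_orbit_self _), ha y⟩), fun _ => rfl, fun _ => rfl⟩

/-- Let `G` act on a topological space `Y` by homeomorphisms, `P ⊆ Y`
a `G`-invariant subset and `r : Y → Y` continuous with: `r y` in the closure of `G • y`,
`r y ∈ P`, any two points of `P` in the closure of one orbit are in the same orbit, and
`r p ∈ G • p` for `p ∈ P`. Then the relation "orbit closures intersect" is an equivalence
relation `~` on `Y`, and the inclusion `P ↪ Y` induces a homeomorphism `P/G ≃ₜ Y/~`
(both with the quotient topology) whose inverse is induced by `r`. -/
theorem moduli_homeomorph_sEquivalence_quotient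
    {Y : Type*} [TopologicalSpace Y] {G : Type*} [Group G] [MulAction G Y]
    (hg : ∀ g : G, Continuous fun y : Y => g • y)
    (P : Set Y) (r : Y → Y)
    (ha : ∀ y : Y, r y ∈ closure (MulAction.orbit G y))
    (hb : ∀ y : Y, r y ∈ P)
    (hc : ∀ y : Y, ∀ p ∈ P, ∀ q ∈ P, p ∈ closure (MulAction.orbit G y) →
      q ∈ closure (MulAction.orbit G y) → ∃ g : G, g • p = q)
    (hPinv : ∀ g : G, ∀ p ∈ P, g • p ∈ P)
    (hr : Continuous r)
    (hrP : ∀ p ∈ P, r p ∈ MulAction.orbit G p) :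
    ∃ hequiv : Equivalence (orbitClosureRel G Y),
      ∃ e : Quotient (Setoid.comap (Subtype.val : P → Y) (MulAction.orbitRel G Y)) ≃ₜ
            Quotient (Setoid.mk (orbitClosureRel G Y) hequiv),
        (∀ p : P,
          e (Quotient.mk (Setoid.comap (Subtype.val : P → Y) (MulAction.orbitRel G Y)) p)
            = Quotient.mk (Setoid.mk (orbitClosureRel G Y) hequiv) (p : Y)) ∧
        (∀ y : Y,
          e.symm (Quotient.mk (Setoid.mk (orbitClosureRel G Y) hequiv) y)
            = Quotient.mk (Setoid.comap (Subtype.val : P → Y) (MulAction.orbitRel G Y))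
                (⟨r y, hb y⟩ : P)) :=
  moduli_homeomorph_sEquivalence_quotient_general hg P r ha hb hc hr hrP
end

section
/- For every x ∈ X there exist a sequence (t_n) of positive real numbers with t_n → 0 and a point y ∈ X with h(y) = 0 such that t_n • x converges to y in X. -/
/-!
Scaling by `t ∈ (0, 1]` multiplies each coordinate `h_j` by `t ^ d_j`, so the ray `t • x`,
`0 < t ≤ 1`, stays in the compact set `h⁻¹(closedBall 0 ‖h x‖)`, while `h (t • x) → 0` as
`t → 0` because every `d_j ≥ 1`. A subsequence of `(1/(k+1)) • x` converges by sequential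
compactness, and by continuity its limit lies in `h⁻¹(0)`.
-/

open Filter Topology

theorem IsCompact.exists_subseq_tendsto_of_tendsto_comp
    {X Y : Type*} [TopologicalSpace X] [FirstCountableTopology X] [TopologicalSpace Y]
    [T2Space Y] {f : X → Y} (hf : Continuous f) {K : Set X} (hK : IsCompact K)
    {u : ℕ → X} (hu : ∀ k, u k ∈ K) {c : Y} (hc : Tendsto (f ∘ u) atTop (𝓝 c)) :
    ∃ y, f y = c ∧ ∃ φ : ℕ → ℕ, StrictMono φ ∧ Tendsto (u ∘ φ) atTop (𝓝 y) := by
  obtain ⟨y, -, φ, hφ, hconv⟩ := hK.tendsto_subseq hu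
  have hfy : Tendsto (f ∘ u ∘ φ) atTop (𝓝 (f y)) := (hf.tendsto y).comp hconv
  exact ⟨y, tendsto_nhds_unique hfy (hc.comp hφ.tendsto_atTop), φ, hφ, hconv⟩

section Homogeneous

variable {X : Type*} [MulAction ℂˣ X] {n : ℕ} {h : X → Fin n → ℂ} {d : Fin n → ℕ}

theorem norm_apply_smul_le_of_norm_le_one
    (hhom : ∀ (t : ℂˣ) (x : X) (j : Fin n), h (t • x) j = (t : ℂ) ^ d j * h x j)
    {t : ℂˣ} (ht : ‖(t : ℂ)‖ ≤ 1) (x : X) : ‖h (t • x)‖ ≤ ‖h x‖ := by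
  refine (pi_norm_le_iff_of_nonneg (norm_nonneg _)).2 fun j => ?_
  calc ‖h (t • x) j‖ = ‖(t : ℂ)‖ ^ d j * ‖h x j‖ := by rw [hhom, norm_mul, norm_pow]
    _ ≤ 1 * ‖h x j‖ := by gcongr; exact pow_le_one₀ (norm_nonneg _) ht
    _ ≤ ‖h x‖ := (one_mul _).trans_le (norm_le_pi_norm (h x) j)

theorem tendsto_apply_smul_zero
    (hd : ∀ j, 1 ≤ d j)
    (hhom : ∀ (t : ℂˣ) (x : X) (j : Fin n), h (t • x) j = (t : ℂ) ^ d j * h x j)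
    {ι : Type*} {l : Filter ι} {t : ι → ℂˣ} (ht : Tendsto (fun i => (t i : ℂ)) l (𝓝 0))
    (x : X) : Tendsto (fun i => h (t i • x)) l (𝓝 0) := by
  refine tendsto_pi_nhds.2 fun j => ?_
  have hlim := (ht.pow (d j)).mul_const (h x j)
  rw [zero_pow (by have := hd j; omega), zero_mul] at hlim
  simpa only [hhom, Pi.zero_apply] using hlim

end Homogeneous

/-- With `X` metrizable carrying a continuous `ℂˣ`-action and
`h : X → ℂⁿ` continuous, proper, homogeneous of degrees `d j ≥ 1` (positive reals acting
through their image in `ℂˣ`): for every `x ∈ X` there are positive reals `t n → 0` and a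
point `y` with `h y = 0` such that `t n • x → y` in `X`. -/
theorem flows_into_nilpotent_cone
    {X : Type*} [TopologicalSpace X] [TopologicalSpace.MetrizableSpace X]
    [MulAction ℂˣ X]
    {n : ℕ} (h : X → Fin n → ℂ) (hcont : Continuous h)
    (hproper : ∀ K : Set (Fin n → ℂ), IsCompact K → IsCompact (h ⁻¹' K))
    (d : Fin n → ℕ) (hd : ∀ j, 1 ≤ d j)
    (hhom : ∀ (t : ℂˣ) (x : X) (j : Fin n), h (t • x) j = (t : ℂ) ^ d j * h x j)
    (x : X) :
    ∃ t : ℕ → ℝ, ∃ ht : ∀ k, 0 < t k,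
      Filter.Tendsto t Filter.atTop (nhds 0) ∧
      ∃ y : X, h y = 0 ∧
        Filter.Tendsto
          (fun k => (Units.mk0 ((t k : ℂ)) (by
            exact_mod_cast (ht k).ne')) • x)
          Filter.atTop (nhds y) := by
  set s : ℕ → ℝ := fun k => 1 / (k + 1)
  have hs_pos : ∀ k, 0 < s k := fun k => by positivity
  have hs_le : ∀ k, s k ≤ 1 := fun k => by
    simpa only [s] using div_le_one_of_le₀ (by simp) (by positivity : (0 : ℝ) ≤ k + 1)
  have hs_lim : Tendsto s atTop (𝓝 0) := tendsto_one_div_add_atTop_nhds_zero_nat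
  set u : ℕ → ℂˣ := fun k => Units.mk0 (s k : ℂ) (by exact_mod_cast (hs_pos k).ne')
  have hu_lim : Tendsto (fun k => (u k : ℂ)) atTop (𝓝 0) :=
    (Complex.continuous_ofReal.tendsto 0).comp hs_lim
  have hu_mem : ∀ k, u k • x ∈ h ⁻¹' Metric.closedBall 0 ‖h x‖ := fun k => by
    simpa using norm_apply_smul_le_of_norm_le_one hhom
      (by simpa [u, abs_of_pos (hs_pos k)] using hs_le k) x
  obtain ⟨y, hy, φ, hφ, hconv⟩ :=
    (hproper _ (isCompact_closedBall 0 ‖h x‖)).exists_subseq_tendsto_of_tendsto_comp hcont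
      hu_mem (tendsto_apply_smul_zero hd hhom hu_lim x)
  exact ⟨s ∘ φ, fun k => hs_pos _, hs_lim.comp hφ.tendsto_atTop, y, hy, hconv⟩
end

section
/- If x ∈ X satisfies h(x) ≠ 0, then f(t • x) tends to −∞ as the positive real parameter t tends to +∞. -/
/-!
A nonpositive proper function tends to `-∞` at infinity of `X`, so it suffices that the ray
`t ↦ t • x` leaves every compact set. It does: some coordinate `h x j` is nonzero, and
`‖h (t • x) j‖ = t ^ d j * ‖h x j‖` is unbounded, whereas the continuous `h` is bounded on compacts.
-/

open Filter

theorem tendsto_cocompact_atBot_of_isCompact_preimage {X : Type*} [TopologicalSpace X]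
    {f : X → ℝ} {c : ℝ} (hf : ∀ K : Set ℝ, IsCompact K → IsCompact (f ⁻¹' K))
    (hle : ∀ x, f x ≤ c) : Tendsto f (cocompact X) atBot := by
  refine tendsto_atBot.2 fun b => ?_
  filter_upwards [(hf _ (isCompact_Icc (a := b) (b := c))).compl_mem_cocompact] with y hy
  by_contra! hby
  exact hy ⟨hby.le, hle y⟩

theorem tendsto_cocompact_of_tendsto_norm_comp {ι X E : Type*} [TopologicalSpace X]
    [NormedAddCommGroup E] [ProperSpace E] {l : Filter ι} {g : ι → X} {φ : X → E}
    (hφ : Continuous φ) (hg : Tendsto (fun i => ‖φ (g i)‖) l atTop) :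
    Tendsto g l (cocompact X) := by
  have : Tendsto (φ ∘ g) l (cocompact E) :=
    Metric.cobounded_eq_cocompact (α := E) ▸ tendsto_norm_atTop_iff_cobounded.1 hg
  exact (tendsto_comap_iff.2 this).mono_right (comap_cocompact_le hφ)

theorem tendsto_norm_homogeneous_smul_atTop {ι X : Type*} [MulAction ℂˣ X] {φ : X → ℂ} {d : ℕ}
    (hφ : ∀ (t : ℂˣ) (x : X), φ (t • x) = (t : ℂ) ^ d * φ x) (hd : d ≠ 0) {x : X} (hx : φ x ≠ 0)
    {l : Filter ι} {u : ι → ℂˣ} (hu : Tendsto (fun i => ‖(u i : ℂ)‖) l atTop) :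
    Tendsto (fun i => ‖φ (u i • x)‖) l atTop := by
  simp only [hφ, norm_mul, norm_pow]
  exact ((tendsto_pow_atTop hd).comp hu).atTop_mul_const (norm_pos_iff.2 hx)

/-- With `X` metrizable carrying a continuous `ℂˣ`-action,
`h : X → ℂⁿ` continuous, proper, homogeneous of degrees `d j ≥ 1` (positive reals acting
through their image in `ℂˣ`), and `f : X → ℝ` continuous, proper and nonpositive: if
`h x ≠ 0`, then `f (t • x) → -∞` as the positive real parameter `t → +∞`. -/
theorem f_unbounded_below_along_orbit
    {X : Type*} [TopologicalSpace X]
    [MulAction ℂˣ X]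
    {n : ℕ} (h : X → Fin n → ℂ) (hcont : Continuous h)
    (d : Fin n → ℕ) (hd : ∀ j, 1 ≤ d j)
    (hhom : ∀ (t : ℂˣ) (x : X) (j : Fin n), h (t • x) j = (t : ℂ) ^ d j * h x j)
    (f : X → ℝ)
    (hfproper : ∀ K : Set ℝ, IsCompact K → IsCompact (f ⁻¹' K))
    (hfle : ∀ x, f x ≤ 0)
    (x : X) (hx : h x ≠ 0) :
    Filter.Tendsto
      (fun t : {t : ℝ // 0 < t} =>
        f ((Units.mk0 (((t : ℝ) : ℂ)) (by exact_mod_cast t.2.ne')) • x))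
      Filter.atTop Filter.atBot := by
  obtain ⟨j, hj⟩ : ∃ j, h x j ≠ 0 := Function.ne_iff.1 hx
  have hray : Tendsto (fun t : {t : ℝ // 0 < t} =>
      ‖((Units.mk0 (((t : ℝ) : ℂ)) (by exact_mod_cast t.2.ne') : ℂˣ) : ℂ)‖) atTop atTop := by
    simp only [Units.val_mk0, Complex.norm_real, Real.norm_eq_abs]
    exact tendsto_abs_atTop_atTop.comp (tendsto_comp_val_Ioi_atTop.2 tendsto_id)
  have horbit := tendsto_norm_homogeneous_smul_atTop (φ := (h · j)) (hhom · · j)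
    (Nat.one_le_iff_ne_zero.1 (hd j)) hj hray
  exact (tendsto_cocompact_atBot_of_isCompact_preimage hfproper hfle).comp
    (tendsto_cocompact_of_tendsto_norm_comp ((continuous_apply j).comp hcont) horbit)
end

section
/- The orbit space W/ℂ*, with the quotient topology, is a compact Hausdorff space, and the image of X × ℂ* in W/ℂ* is a dense open subset that is homeomorphic to X via the map induced by (x, z) ↦ z^{-1} • x. -/
/-! The gauge `ν (x, z) = max (maxⱼ ‖hⱼ x‖ ^ (1 / dⱼ)) ‖z‖` is continuous, vanishes exactly off `W`
and satisfies `ν (t • p) = ‖t‖ ν p`. Its level set `ν = 1` is compact because `h` is proper, and it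
meets every orbit, so `W/ℂˣ` is compact. The gauge also recovers `‖t‖ = ν (t • w) / ν w`: along a
convergent net `(tᵢ • wᵢ, wᵢ)` the `tᵢ` stay in a compact annulus of `ℂˣ`, so the action is proper
and the quotient is Hausdorff. Finally `x ↦ [x : 1]` is an open embedding `X → W/ℂˣ` with image
the orbits of points with `z ≠ 0` and inverse `[x : z] ↦ z⁻¹ • x`; that image is dense since
`(x, ε) → (x, 0)`. -/

open Filter Topology NNReal

section HomogeneousGauge

variable {𝕜 Y : Type*} [TopologicalSpace Y]

theorem compactSpace_quotient_of_isCompact_of_forall_exists_smul_mem {G : Type*} [Group G]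
    [MulAction G Y] {K : Set Y} (hK : IsCompact K) (hK_meets : ∀ y : Y, ∃ g : G, g • y ∈ K) :
    CompactSpace (Quotient (MulAction.orbitRel G Y)) := by
  refine ⟨?_⟩
  convert hK.image (continuous_quotient_mk' (s := MulAction.orbitRel G Y))
  refine (Set.eq_univ_of_forall fun y => ?_).symm
  induction y using Quotient.inductionOn with | h y => ?_
  obtain ⟨g, hg⟩ := hK_meets y
  exact ⟨g • y, hg, Quotient.sound (MulAction.mem_orbit y g)⟩

theorem compactSpace_quotient_of_isCompact_level_one [RCLike 𝕜] [MulAction 𝕜ˣ Y] (ν : Y → ℝ≥0)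
    (hν_ne : ∀ y, ν y ≠ 0) (hν_smul : ∀ (t : 𝕜ˣ) y, ν (t • y) = ‖(t : 𝕜)‖₊ * ν y)
    (hK : IsCompact {y | ν y = 1}) :
    CompactSpace (Quotient (MulAction.orbitRel 𝕜ˣ Y)) := by
  refine compactSpace_quotient_of_isCompact_of_forall_exists_smul_mem hK fun y => ?_
  have hy : ((ν y : ℝ)⁻¹ : 𝕜) ≠ 0 := by simpa using hν_ne y
  refine ⟨Units.mk0 _ hy, ?_⟩
  simp [hν_smul, hν_ne y]

theorem properSMul_of_nnnorm_smul [NormedField 𝕜] [ProperSpace 𝕜] [T2Space Y]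
    [MulAction 𝕜ˣ Y] [ContinuousSMul 𝕜ˣ Y] (ν : Y → ℝ≥0) (hν : Continuous ν) (hν_ne : ∀ y, ν y ≠ 0)
    (hν_smul : ∀ (t : 𝕜ˣ) y, ν (t • y) = ‖(t : 𝕜)‖₊ * ν y) : ProperSMul 𝕜ˣ Y := by
  refine (properSMul_iff_continuousSMul_ultrafilter_tendsto_t2).2 ⟨inferInstance, ?_⟩
  intro 𝒰 y₁ y₂ hlim
  set r : ℝ≥0 := ν y₁ / ν y₂
  have hr : r ≠ 0 := div_ne_zero (hν_ne y₁) (hν_ne y₂)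
  have hnorm : Tendsto (fun g : 𝕜ˣ × Y => ‖(g.1 : 𝕜)‖₊) 𝒰 (𝓝 r) := by
    have hν_pair := ((hν.comp continuous_fst).tendsto _).comp hlim |>.div
      (((hν.comp continuous_snd).tendsto _).comp hlim) (hν_ne y₂)
    refine hν_pair.congr fun g => ?_
    simp [hν_smul, hν_ne]
  set A : Set 𝕜 := {z | ‖z‖₊ ∈ Set.Icc (r / 2) (2 * r)}
  have hA : IsCompact A := by
    refine (isCompact_closedBall (0 : 𝕜) (2 * r)).of_isClosed_subset
      (isClosed_Icc.preimage continuous_nnnorm) fun z hz => ?_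
    rw [Metric.mem_closedBall, dist_zero_right, ← coe_nnnorm]
    exact_mod_cast hz.2
  have hA_ev : ∀ᶠ g : 𝕜ˣ × Y in 𝒰, (g.1 : 𝕜) ∈ A :=
    hnorm.eventually (Icc_mem_nhds (NNReal.half_lt_self hr) (lt_two_mul_self hr.bot_lt))
  obtain ⟨b, hbA, hb⟩ := hA.ultrafilter_le_nhds (𝒰.map fun g => (g.1 : 𝕜))
    (by rwa [Ultrafilter.coe_map, le_principal_iff, Filter.mem_map])
  have hb0 : b ≠ 0 := by
    rintro rfl
    simp [A, hr] at hbA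
  refine ⟨Units.mk0 b hb0, ?_⟩
  rw [Units.isEmbedding_val₀.tendsto_nhds_iff]
  exact hb

end HomogeneousGauge

section CutNorm

variable {𝕜 X ι : Type*} [NormedField 𝕜] [Fintype ι]

noncomputable def cutGauge (h : X → ι → 𝕜) (d : ι → ℕ) (p : X × 𝕜) : ℝ≥0 :=
  (Finset.univ.sup fun j => ‖h p.1 j‖₊ ^ (d j : ℝ)⁻¹) ⊔ ‖p.2‖₊

variable {h : X → ι → 𝕜} {d : ι → ℕ}

theorem cutGauge_eq_zero_iff (hd : ∀ j, d j ≠ 0) {p : X × 𝕜} :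
    cutGauge h d p = 0 ↔ h p.1 = 0 ∧ p.2 = 0 := by
  have hd' : ∀ j, ((d j : ℝ)⁻¹) ≠ 0 := fun j => by simpa using hd j
  simp only [cutGauge, ← bot_eq_zero', sup_eq_bot_iff, Finset.sup_eq_bot_iff, Finset.mem_univ,
    true_implies]
  simp [bot_eq_zero', funext_iff, NNReal.rpow_eq_zero_iff, hd']

theorem cutGauge_smul [MulAction 𝕜ˣ X] (hd : ∀ j, d j ≠ 0)
    (hhom : ∀ (t : 𝕜ˣ) (x : X) (j : ι), h (t • x) j = (t : 𝕜) ^ d j * h x j)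
    (t : 𝕜ˣ) (p : X × 𝕜) : cutGauge h d (t • p) = ‖(t : 𝕜)‖₊ * cutGauge h d p := by
  have hroot : ∀ j, ‖h (t • p.1) j‖₊ ^ (d j : ℝ)⁻¹ = ‖(t : 𝕜)‖₊ * ‖h p.1 j‖₊ ^ (d j : ℝ)⁻¹ := by
    intro j
    rw [hhom, nnnorm_mul, nnnorm_pow, NNReal.mul_rpow, NNReal.pow_rpow_inv_natCast _ (hd j)]
  simp only [cutGauge, Prod.smul_fst, Prod.smul_snd, hroot, ← NNReal.mul_finset_sup,
    Units.smul_def, smul_eq_mul, nnnorm_mul]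
  exact (mul_sup₀ zero_le _ _).symm

variable [TopologicalSpace X]

theorem continuous_cutGauge (hh : Continuous h) : Continuous (cutGauge h d) := by
  refine Continuous.max (Continuous.finset_sup_apply fun j _ => ?_) (by fun_prop)
  exact (NNReal.continuous_rpow_const (by positivity)).comp (by fun_prop)

theorem isCompact_cutGauge_le_one [ProperSpace 𝕜] (hd : ∀ j, d j ≠ 0) (hh : Continuous h)
    (hh_proper : ∀ K : Set (ι → 𝕜), IsCompact K → IsCompact (h ⁻¹' K)) :
    IsCompact {p : X × 𝕜 | cutGauge h d p ≤ 1} := by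
  have hsub : {p : X × 𝕜 | cutGauge h d p ≤ 1} ⊆
      (h ⁻¹' Set.univ.pi fun _ => Metric.closedBall 0 1) ×ˢ Metric.closedBall 0 1 := by
    rintro ⟨x, z⟩ hp
    simp only [cutGauge, sup_le_iff, Finset.sup_le_iff, Finset.mem_univ, true_implies,
      NNReal.rpow_inv_le_iff (Nat.cast_pos.2 (hd _).bot_lt), NNReal.one_rpow] at hp
    exact ⟨fun j _ => mem_closedBall_zero_iff.2 (by exact_mod_cast hp.1 j),
      mem_closedBall_zero_iff.2 (by exact_mod_cast hp.2)⟩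
  exact ((hh_proper _ (isCompact_univ_pi fun _ => isCompact_closedBall _ _)).prod
    (isCompact_closedBall _ _)).of_isClosed_subset
    (isClosed_le (continuous_cutGauge hh) continuous_const) hsub

end CutNorm

section AffineChart

variable {𝕜 X : Type*} [NontriviallyNormedField 𝕜] [MulAction 𝕜ˣ X] {W : SubMulAction 𝕜ˣ (X × 𝕜)}

theorem SubMulAction.mk_mem_of_ne_zero (hW : ∀ x : X, (x, (1 : 𝕜)) ∈ W) (x : X) {z : 𝕜}
    (hz : z ≠ 0) : (x, z) ∈ W := by
  simpa [Units.smul_def] using W.smul_mem (Units.mk0 z hz) (hW ((Units.mk0 z hz)⁻¹ • x))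

variable (W) in
def affinePart : Set W := {p | (p : X × 𝕜).2 ≠ 0}

theorem mem_affinePart {p : W} : p ∈ affinePart W ↔ (p : X × 𝕜).2 ≠ 0 := Iff.rfl

def affinePartUnit (p : affinePart W) : 𝕜ˣ := Units.mk0 _ (mem_affinePart.1 p.2)

def dehomogenize (p : affinePart W) : X := (affinePartUnit p)⁻¹ • (p : X × 𝕜).1

variable (hW : ∀ x : X, (x, (1 : 𝕜)) ∈ W)

variable (W) in
def affineChart (x : X) : Quotient (MulAction.orbitRel 𝕜ˣ W) :=
  Quotient.mk _ ⟨(x, 1), hW x⟩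

theorem affineChart_dehomogenize (p : affinePart W) :
    affineChart W hW (dehomogenize p) = Quotient.mk _ (p : W) := by
  refine Quotient.sound (MulAction.mem_orbit_iff.2 ⟨(affinePartUnit p)⁻¹, Subtype.ext ?_⟩)
  have hz := mem_affinePart.1 p.2
  exact Prod.ext rfl (by simpa [Units.smul_def, affinePartUnit] using inv_mul_cancel₀ hz)

theorem affineChart_injective : Function.Injective (affineChart W hW) := by
  intro x y hxy
  obtain ⟨t, ht⟩ := MulAction.mem_orbit_iff.1 (Quotient.exact hxy)
  have ht1 : (t : 𝕜) = 1 := by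
    simpa [Units.smul_def] using congrArg (fun p : W => (p : X × 𝕜).2) ht
  rw [Units.val_eq_one.1 ht1] at ht
  simpa using (congrArg (fun p : W => (p : X × 𝕜).1) ht).symm

theorem range_affineChart : Set.range (affineChart W hW) = Quotient.mk _ '' affinePart W := by
  refine subset_antisymm ?_ ?_
  · rintro _ ⟨x, rfl⟩
    exact ⟨⟨(x, 1), hW x⟩, one_ne_zero, rfl⟩
  · rintro _ ⟨p, hp, rfl⟩
    exact ⟨_, affineChart_dehomogenize hW ⟨p, hp⟩⟩

variable [TopologicalSpace X]

theorem continuous_affineChart : Continuous (affineChart W hW) :=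
  continuous_quotient_mk'.comp (by fun_prop)

variable (W) in
theorem isOpen_affinePart : IsOpen (affinePart W) :=
  isOpen_ne_fun (by fun_prop) continuous_const

theorem dense_affinePart (hW : ∀ x : X, (x, (1 : 𝕜)) ∈ W) : Dense (affinePart W) := by
  intro p
  by_cases hp : (p : X × 𝕜).2 = 0
  · let γ : 𝕜 → W := fun z => ⟨((p : X × 𝕜).1, z), by
      rcases eq_or_ne z 0 with rfl | hz
      exacts [hp ▸ p.2, W.mk_mem_of_ne_zero hW _ hz]⟩
    have hγ : Tendsto γ (𝓝[≠] 0) (𝓝 p) := by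
      have hγ0 : γ 0 = p := Subtype.ext (Prod.ext rfl hp.symm)
      exact hγ0 ▸ ((Continuous.tendsto (by fun_prop) 0).mono_left nhdsWithin_le_nhds)
    exact mem_closure_of_tendsto hγ (eventually_nhdsWithin_of_forall fun z hz => hz)
  · exact subset_closure hp

variable [ContinuousSMul 𝕜ˣ X]

theorem continuous_dehomogenize : Continuous (dehomogenize (W := W)) := by
  have hunit : Continuous fun p : affinePart W => (affinePartUnit p)⁻¹ := by
    rw [Units.isEmbedding_val₀.continuous_iff]
    exact Continuous.inv₀ (by fun_prop) fun p => mem_affinePart.1 p.2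
  exact hunit.smul (by fun_prop)

theorem isOpenMap_affineChart : IsOpenMap (affineChart W hW) := by
  intro U hU
  have hV : IsOpen (((↑) : affinePart W → W) '' (dehomogenize ⁻¹' U)) :=
    (isOpen_affinePart W).isOpenMap_subtype_val _ (hU.preimage continuous_dehomogenize)
  have hq : IsOpenQuotientMap (Quotient.mk (MulAction.orbitRel 𝕜ˣ W)) :=
    MulAction.isOpenQuotientMap_quotientMk
  convert hq.isOpenMap _ hV
  ext y
  constructor
  · rintro ⟨x, hx, rfl⟩
    refine ⟨⟨(x, 1), hW x⟩, ⟨⟨_, one_ne_zero⟩, ?_, rfl⟩, rfl⟩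
    simpa [dehomogenize, affinePartUnit] using hx
  · rintro ⟨_, ⟨p, hpU, rfl⟩, rfl⟩
    exact ⟨_, hpU, affineChart_dehomogenize hW p⟩

theorem isOpenEmbedding_affineChart : IsOpenEmbedding (affineChart W hW) :=
  .of_continuous_injective_isOpenMap (continuous_affineChart hW) (affineChart_injective hW)
    (isOpenMap_affineChart hW)

noncomputable def affinePartHomeomorph :
    (Quotient.mk (MulAction.orbitRel 𝕜ˣ W) '' affinePart W) ≃ₜ X :=
  ((isOpenEmbedding_affineChart hW).isEmbedding.toHomeomorph.trans
    (.setCongr (range_affineChart hW))).symm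

theorem affinePartHomeomorph_mk (p : affinePart W) :
    affinePartHomeomorph hW ⟨Quotient.mk _ (p : W), p, p.2, rfl⟩ = dehomogenize p := by
  rw [affinePartHomeomorph, Homeomorph.symm_apply_eq]
  exact Subtype.ext (affineChart_dehomogenize hW p).symm

end AffineChart

section SymplecticCut

variable {X : Type*} [MulAction ℂˣ X] {n : ℕ} {h : X → Fin n → ℂ} {d : Fin n → ℕ}
  {hhom : ∀ (t : ℂˣ) (x : X) (j : Fin n), h (t • x) j = (t : ℂ) ^ d j * h x j}

theorem mem_symplecticCutSubMulAction_iff {p : X × ℂ} :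
    p ∈ symplecticCutSubMulAction h d hhom ↔ ¬(h p.1 = 0 ∧ p.2 = 0) :=
  not_congr Set.mem_prod

theorem mk_one_mem_symplecticCutSubMulAction (x : X) :
    (x, (1 : ℂ)) ∈ symplecticCutSubMulAction h d hhom :=
  mem_symplecticCutSubMulAction_iff.2 fun hx => one_ne_zero hx.2

theorem cutGauge_ne_zero_of_mem (hd : ∀ j, d j ≠ 0) (p : symplecticCutSubMulAction h d hhom) :
    cutGauge h d p ≠ 0 :=
  (cutGauge_eq_zero_iff hd).not.2 (mem_symplecticCutSubMulAction_iff.1 p.2)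

variable [TopologicalSpace X]

theorem compactSpace_quotient_symplecticCut (hd : ∀ j, d j ≠ 0) (hh : Continuous h)
    (hh_proper : ∀ K : Set (Fin n → ℂ), IsCompact K → IsCompact (h ⁻¹' K)) :
    CompactSpace (Quotient (MulAction.orbitRel ℂˣ (symplecticCutSubMulAction h d hhom))) := by
  refine compactSpace_quotient_of_isCompact_level_one (𝕜 := ℂ) (fun p => cutGauge h d p)
    (cutGauge_ne_zero_of_mem hd) (fun t p => cutGauge_smul hd hhom t p) ?_
  have hslice : IsCompact {p : X × ℂ | cutGauge h d p = 1} :=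
    (isCompact_cutGauge_le_one hd hh hh_proper).of_isClosed_subset
      (isClosed_eq (continuous_cutGauge hh) continuous_const) fun p hp => hp.le
  rw [Subtype.isCompact_iff]
  convert hslice
  refine Set.image_preimage_eq_of_subset fun p (hp : cutGauge h d p = 1) => ⟨⟨p, ?_⟩, rfl⟩
  exact mem_symplecticCutSubMulAction_iff.2 fun hp0 =>
    one_ne_zero (hp ▸ (cutGauge_eq_zero_iff hd).2 hp0)

theorem properSMul_symplecticCut [T2Space X] [ContinuousSMul ℂˣ X] (hd : ∀ j, d j ≠ 0)
    (hh : Continuous h) : ProperSMul ℂˣ (symplecticCutSubMulAction h d hhom) :=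
  properSMul_of_nnnorm_smul (fun p => cutGauge h d p)
    ((continuous_cutGauge hh).comp continuous_subtype_val) (cutGauge_ne_zero_of_mem hd)
    fun t p => cutGauge_smul hd hhom t p

end SymplecticCut

set_option synthInstance.maxHeartbeats 1000000 in
theorem cut_orbit_space_compactification_general
    {X : Type*} [TopologicalSpace X] [TopologicalSpace.MetrizableSpace X]
    [MulAction ℂˣ X] [ContinuousSMul ℂˣ X]
    {n : ℕ} (h : X → Fin n → ℂ) (hcont : Continuous h)
    (hproper : ∀ K : Set (Fin n → ℂ), IsCompact K → IsCompact (h ⁻¹' K))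
    (d : Fin n → ℕ) (hd : ∀ j, 1 ≤ d j)
    (hhom : ∀ (t : ℂˣ) (x : X) (j : Fin n), h (t • x) j = (t : ℂ) ^ d j * h x j) :
    CompactSpace
      (Quotient (MulAction.orbitRel ℂˣ (symplecticCutSubMulAction h d hhom))) ∧
    T2Space
      (Quotient (MulAction.orbitRel ℂˣ (symplecticCutSubMulAction h d hhom))) ∧
    IsOpen (Quotient.mk (MulAction.orbitRel ℂˣ (symplecticCutSubMulAction h d hhom)) ''
      {p : symplecticCutSubMulAction h d hhom | (p : X × ℂ).2 ≠ 0}) ∧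
    Dense (Quotient.mk (MulAction.orbitRel ℂˣ (symplecticCutSubMulAction h d hhom)) ''
      {p : symplecticCutSubMulAction h d hhom | (p : X × ℂ).2 ≠ 0}) ∧
    ∃ e : (Quotient.mk (MulAction.orbitRel ℂˣ (symplecticCutSubMulAction h d hhom)) ''
        {p : symplecticCutSubMulAction h d hhom | (p : X × ℂ).2 ≠ 0}) ≃ₜ X,
      ∀ (p : symplecticCutSubMulAction h d hhom) (hz : (p : X × ℂ).2 ≠ 0),
        e ⟨Quotient.mk (MulAction.orbitRel ℂˣ (symplecticCutSubMulAction h d hhom)) p,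
            ⟨p, hz, rfl⟩⟩
          = (Units.mk0 ((p : X × ℂ).2) hz)⁻¹ • (p : X × ℂ).1 := by
  have hd' : ∀ j, d j ≠ 0 := fun j => Nat.one_le_iff_ne_zero.1 (hd j)
  have hW := mk_one_mem_symplecticCutSubMulAction (h := h) (hhom := hhom)
  have := properSMul_symplecticCut hd' (hhom := hhom) hcont
  exact ⟨compactSpace_quotient_symplecticCut hd' hcont hproper, inferInstance,
    MulAction.isOpenQuotientMap_quotientMk.isOpenMap _ (isOpen_affinePart _),
    Quotient.mk_surjective.denseRange.dense_image continuous_quotient_mk' (dense_affinePart hW),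
    affinePartHomeomorph hW, fun p hz => affinePartHomeomorph_mk hW ⟨p, hz⟩⟩

set_option synthInstance.maxHeartbeats 1000000 in
/-- With `X` metrizable carrying a continuous `ℂˣ`-action, `h : X → ℂⁿ`
continuous, proper, homogeneous of degrees `d j ≥ 1`, `f : X → ℝ` continuous, proper and
nonpositive, and `c < 0` with `f x > c` whenever `h x = 0`: the orbit space `W/ℂˣ` of
`W = (X × ℂ) \ (h⁻¹(0) × {0})` (with the quotient topology) is a compact Hausdorff
space, and the image of `X × ℂˣ` in `W/ℂˣ` is a dense open subset homeomorphic to `X`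
via the map induced by `(x, z) ↦ z⁻¹ • x`. -/
theorem cut_orbit_space_compactification
    {X : Type*} [TopologicalSpace X] [TopologicalSpace.MetrizableSpace X]
    [MulAction ℂˣ X] [ContinuousSMul ℂˣ X]
    {n : ℕ} (h : X → Fin n → ℂ) (hcont : Continuous h)
    (hproper : ∀ K : Set (Fin n → ℂ), IsCompact K → IsCompact (h ⁻¹' K))
    (d : Fin n → ℕ) (hd : ∀ j, 1 ≤ d j)
    (hhom : ∀ (t : ℂˣ) (x : X) (j : Fin n), h (t • x) j = (t : ℂ) ^ d j * h x j)
    (f : X → ℝ) (hf : Continuous f)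
    (hfproper : ∀ K : Set ℝ, IsCompact K → IsCompact (f ⁻¹' K))
    (hfle : ∀ x, f x ≤ 0) (c : ℝ) (hc : c < 0)
    (hcf : ∀ x, h x = 0 → c < f x) :
    CompactSpace
      (Quotient (MulAction.orbitRel ℂˣ (symplecticCutSubMulAction h d hhom))) ∧
    T2Space
      (Quotient (MulAction.orbitRel ℂˣ (symplecticCutSubMulAction h d hhom))) ∧
    IsOpen (Quotient.mk (MulAction.orbitRel ℂˣ (symplecticCutSubMulAction h d hhom)) ''
      {p : symplecticCutSubMulAction h d hhom | (p : X × ℂ).2 ≠ 0}) ∧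
    Dense (Quotient.mk (MulAction.orbitRel ℂˣ (symplecticCutSubMulAction h d hhom)) ''
      {p : symplecticCutSubMulAction h d hhom | (p : X × ℂ).2 ≠ 0}) ∧
    ∃ e : (Quotient.mk (MulAction.orbitRel ℂˣ (symplecticCutSubMulAction h d hhom)) ''
        {p : symplecticCutSubMulAction h d hhom | (p : X × ℂ).2 ≠ 0}) ≃ₜ X,
      ∀ (p : symplecticCutSubMulAction h d hhom) (hz : (p : X × ℂ).2 ≠ 0),
        e ⟨Quotient.mk (MulAction.orbitRel ℂˣ (symplecticCutSubMulAction h d hhom)) p,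
            ⟨p, hz, rfl⟩⟩
          = (Units.mk0 ((p : X × ℂ).2) hz)⁻¹ • (p : X × ℂ).1 :=
  cut_orbit_space_compactification_general h hcont hproper d hd hhom
end
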